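/- arXiv:1312.4163 — 2 statements merged into one kernel-verified Lean document; each statement's English description precedes it below -/
import Mathlib

section
/- Let A be a real m×n matrix with m < n. Then every nonnegative K-sparse vector is exactly recovered by ℓ1-minimization — i.e., every x ∈ ℝ^n with x ≥ 0 and ‖x‖₀ ≤ K is the unique least ℓ1-norm nonnegative solution to the system Az = Ax — if and only if Aᵀ satisfies the range space property of order K. -/
/-!
Recovery implies the RSP: if `d ≠ 0` lies in `ker A` and is nonnegative off `S`, then for `x`
equal to a large constant on `S` and to `0` off `S`, `x + d` is a feasible competitor of `x`, so
uniqueness forces `∑ d > 0`. A Hahn–Banach separation in Euclidean space turns this condition on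
`ker A` into a vector of `(ker A)ᗮ = R(Aᵀ)` equal to `1` on `S` and `< 1` off `S`.

The RSP implies recovery: if `z ≠ x` are both feasible, `d = z - x` lies in `ker A` and is negative
only on the support of `x`. For the RSP vector `η` of the set `T` where `d < 0`, `∑ ηᵢ dᵢ = 0`, so
`∑ dᵢ = ∑ (1 - ηᵢ) dᵢ`, a sum of nonnegative terms that is positive because `d ≠ 0`.
-/

open Matrix

/-- `x` is the unique least ℓ1-norm nonnegative solution to the system `A z = y`. -/
def uniqueLeastL1 {m n : ℕ} (A : Matrix (Fin m) (Fin n) ℝ) (y : Fin m → ℝ)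
    (x : Fin n → ℝ) : Prop :=
  A.mulVec x = y ∧ 0 ≤ x ∧
    ∀ z : Fin n → ℝ, A.mulVec z = y → 0 ≤ z → z ≠ x → ∑ i, |x i| < ∑ i, |z i|

/-- `Aᵀ` satisfies the range space property of order `K`. -/
def RSPorder {m n : ℕ} (A : Matrix (Fin m) (Fin n) ℝ) (K : ℕ) : Prop :=
  ∀ S : Finset (Fin n), S.card ≤ K →
    ∃ η : Fin n → ℝ, (∃ u : Fin m → ℝ, A.transpose.mulVec u = η) ∧
      (∀ i ∈ S, η i = 1) ∧ (∀ i ∉ S, η i < 1)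

open scoped RealInnerProductSpace

lemma nonpos_of_forall_mul_le {b c : ℝ} (h : ∀ t : ℝ, 0 ≤ t → t * b ≤ c) : b ≤ 0 := by
  by_contra! hb
  have := h ((|c| + 1) / b) (by positivity)
  rw [div_mul_cancel₀ _ hb.ne'] at this
  linarith [le_abs_self c]

lemma le_of_forall_lt_one_mul_lt {a b : ℝ} (hb : 0 < b)
    (h : ∀ t : ℝ, 0 ≤ t → t < 1 → t * a < b) : a ≤ b := by
  by_contra! hab
  have ha : 0 < a := hb.trans hab
  have := h (b / a) (by positivity) ((div_lt_one ha).2 hab)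
  rw [div_mul_cancel₀ _ ha.ne'] at this
  exact lt_irrefl b this

theorem exists_mem_orthogonal_inner_neg_of_disjoint {E : Type*} [NormedAddCommGroup E]
    [InnerProductSpace ℝ E] [CompleteSpace E] {s : Set E} (hs : Convex ℝ s) (hso : IsOpen s)
    {M : Submodule ℝ E} (hsM : Disjoint s M) : ∃ w ∈ Mᗮ, ∀ x ∈ s, ⟪w, x⟫ < 0 := by
  obtain ⟨f, u, hfs, hfM⟩ := geometric_hahn_banach_open hs hso M.convex hsM
  have hfM0 : ∀ x ∈ M, f x = 0 := by
    have hle : ∀ x ∈ M, -f x ≤ 0 := fun x hx =>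
      nonpos_of_forall_mul_le (c := -u) fun t _ => by
        have := hfM (t • x) (M.smul_mem t hx)
        rw [map_smul, smul_eq_mul] at this
        linarith
    intro x hx
    have h₁ := hle x hx
    have h₂ := hle (-x) (M.neg_mem hx)
    rw [map_neg, neg_neg] at h₂
    linarith
  have hu : u ≤ 0 := by simpa using hfM 0 M.zero_mem
  refine ⟨(InnerProductSpace.toDual ℝ E).symm f, ?_, fun x hx => ?_⟩
  · rw [Submodule.mem_orthogonal]
    intro x hx
    rw [real_inner_comm, InnerProductSpace.toDual_symm_apply, hfM0 x hx]
  · rw [InnerProductSpace.toDual_symm_apply]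
    exact (hfs x hx).trans_le hu

lemma convex_setOf_forall_notMem_apply_lt {ι : Type*} (S : Finset ι) (c : ι → ℝ) :
    Convex ℝ {v : EuclideanSpace ℝ ι | ∀ i ∉ S, v i < c i} := by
  simp only [Set.ofPred_forall]
  exact convex_iInter fun i => convex_iInter fun _ =>
    (convex_Iio (c i)).linear_preimage (EuclideanSpace.proj i).toLinearMap

section Coordinates

variable {ι : Type*} [Fintype ι]

def vanishingOn (S : Finset ι) : Submodule ℝ (EuclideanSpace ℝ ι) where
  carrier := {v | ∀ i ∈ S, v i = 0}
  add_mem' ha hb i hi := by simp [ha i hi, hb i hi]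
  zero_mem' _ _ := rfl
  smul_mem' c _ ha i hi := by simp [ha i hi]

lemma apply_eq_zero_of_mem_orthogonal_vanishingOn {S : Finset ι} {σ : EuclideanSpace ℝ ι}
    (hσ : σ ∈ (vanishingOn S)ᗮ) {i : ι} (hi : i ∉ S) : σ i = 0 := by
  classical
  have h := hσ (EuclideanSpace.single i 1) fun j hj => by
    simp [ne_of_mem_of_not_mem hj hi]
  simpa [EuclideanSpace.inner_single_left] using h

lemma orthogonal_sup_vanishingOn_eq_top {L : Submodule ℝ (EuclideanSpace ℝ ι)} {S : Finset ι}
    (hL : ∀ d ∈ L, (∀ i ∉ S, d i = 0) → d = 0) : Lᗮ ⊔ vanishingOn S = ⊤ := by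
  rw [← Submodule.orthogonal_eq_bot_iff, ← Submodule.inf_orthogonal,
    Submodule.orthogonal_orthogonal, Submodule.eq_bot_iff]
  rintro d ⟨hdL, hdS⟩
  exact hL d hdL fun i hi => apply_eq_zero_of_mem_orthogonal_vanishingOn hdS hi

lemma sum_eq_inner_one (d : EuclideanSpace ℝ ι) :
    ∑ i, d i = ⟪d, WithLp.toLp 2 fun _ => 1⟫ := by
  simp [EuclideanSpace.inner_eq_star_dotProduct, dotProduct]

lemma isOpen_setOf_forall_notMem_apply_lt (S : Finset ι) (c : ι → ℝ) :
    IsOpen {v : EuclideanSpace ℝ ι | ∀ i ∉ S, v i < c i} := by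
  simp only [Set.ofPred_forall]
  exact isOpen_iInter_of_finite fun i => isOpen_iInter_of_finite fun _ =>
    isOpen_Iio.preimage (EuclideanSpace.proj i).continuous

lemma inner_nonpos_of_forall_inner_neg {S : Finset ι} {c : ι → ℝ} {w : EuclideanSpace ℝ ι}
    (hw : ∀ v : EuclideanSpace ℝ ι, (∀ i ∉ S, v i < c i) → ⟪w, v⟫ < 0)
    {e : EuclideanSpace ℝ ι} (he : ∀ i ∉ S, e i ≤ 0) : ⟪w, e⟫ ≤ 0 := by
  set v₀ : EuclideanSpace ℝ ι := WithLp.toLp 2 fun i => c i - 1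
  refine nonpos_of_forall_mul_le (c := -⟪w, v₀⟫) fun t ht => ?_
  have := hw (v₀ + t • e) fun i hi => by
    have := mul_nonpos_of_nonneg_of_nonpos ht (he i hi)
    simp only [PiLp.add_apply, PiLp.smul_apply, smul_eq_mul, v₀]
    linarith
  rw [inner_add_right, inner_smul_right] at this
  linarith

lemma exists_mem_orthogonal_inf_vanishingOn_lt_one_sub {L : Submodule ℝ (EuclideanSpace ℝ ι)}
    {S : Finset ι} (h : ∀ d ∈ L, (∀ i ∉ S, 0 ≤ d i) → d ≠ 0 → 0 < ∑ i, d i)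
    {η₀ : EuclideanSpace ℝ ι} (hη₀ : η₀ ∈ Lᗮ)
    (hη₀S : (WithLp.toLp 2 fun _ => 1) - η₀ ∈ vanishingOn S) :
    ∃ v ∈ Lᗮ ⊓ vanishingOn S, ∀ i ∉ S, v i < 1 - η₀ i := by
  classical
  set one : EuclideanSpace ℝ ι := WithLp.toLp 2 fun _ => 1
  set s := {v : EuclideanSpace ℝ ι | ∀ i ∉ S, v i < 1 - η₀ i}
  by_contra! hsM
  obtain ⟨w, hwM, hws⟩ := exists_mem_orthogonal_inner_neg_of_disjoint
    (convex_setOf_forall_notMem_apply_lt S _) (isOpen_setOf_forall_notMem_apply_lt S _)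
    (Set.disjoint_left.2 fun v hvs hvM => (hsM v hvM).elim fun i hi => hi.2.not_gt (hvs i hi.1))
  rw [← Submodule.orthogonal_orthogonal (vanishingOn S), Submodule.inf_orthogonal,
    Submodule.orthogonal_orthogonal] at hwM
  -- `d` is nonnegative off `S` with `∑ d ≤ 0`, against `h`; `σ` is supported on `S`
  obtain ⟨d, hdL, σ, hσ, rfl⟩ := Submodule.mem_sup.1 hwM
  have hσS : ∀ i ∉ S, σ i = 0 := fun i hi => apply_eq_zero_of_mem_orthogonal_vanishingOn hσ hi
  have hline : ∀ t : ℝ, t < 1 → t • one - η₀ ∈ s := fun t ht i _ => by simpa [one] using ht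
  have hpos : 0 < ⟪d + σ, η₀⟫ := by simpa using hws _ (hline 0 one_pos)
  have hdS : ∀ i ∉ S, 0 ≤ d i := fun i hi => by
    have := inner_nonpos_of_forall_inner_neg hws (e := -EuclideanSpace.single i 1) fun j hj => by
      by_cases hji : j = i <;> simp [hji]
    simpa [EuclideanSpace.inner_single_right, hσS i hi] using this
  have hsum : ∑ i, d i ≤ 0 := by
    have hle := le_of_forall_lt_one_mul_lt hpos fun t _ ht => by
      simpa [inner_sub_right, inner_smul_right] using hws _ (hline t ht)
    have hση₀ : ⟪σ, one - η₀⟫ = 0 := by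
      rw [real_inner_comm]; exact hσ _ hη₀S
    calc ∑ i, d i = ⟪d, one⟫ - ⟪d, η₀⟫ + ⟪σ, one - η₀⟫ := by
          rw [sum_eq_inner_one, hη₀ d hdL, hση₀]; ring
      _ = ⟪d + σ, one⟫ - ⟪d + σ, η₀⟫ := by
          rw [inner_sub_right, inner_add_left, inner_add_left]; ring
      _ ≤ 0 := by linarith
  obtain rfl : d = 0 := by
    by_contra hd0
    exact (h d hdL hdS hd0).not_ge hsum
  rw [zero_add] at hpos hws
  obtain rfl : σ = 0 := real_inner_self_nonpos.1 <|
    inner_nonpos_of_forall_inner_neg hws fun i hi => (hσS i hi).le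
  simp at hpos

theorem exists_mem_orthogonal_eq_one_on_lt_one_off (L : Submodule ℝ (EuclideanSpace ℝ ι))
    (S : Finset ι) (h : ∀ d ∈ L, (∀ i ∉ S, 0 ≤ d i) → d ≠ 0 → 0 < ∑ i, d i) :
    ∃ η ∈ Lᗮ, (∀ i ∈ S, η i = 1) ∧ ∀ i ∉ S, η i < 1 := by
  have hL : ∀ d ∈ L, (∀ i ∉ S, d i = 0) → d = 0 := fun d hd hdS => by
    by_contra hd0
    have h₁ := h d hd (fun i hi => (hdS i hi).ge) hd0
    have h₂ := h (-d) (L.neg_mem hd) (fun i hi => by simp [hdS i hi]) (neg_ne_zero.2 hd0)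
    simp only [PiLp.neg_apply, Finset.sum_neg_distrib] at h₂
    linarith
  obtain ⟨η₀, hη₀, r, hr, hη₀r⟩ := Submodule.mem_sup.1
    ((orthogonal_sup_vanishingOn_eq_top hL).symm ▸ Submodule.mem_top :
      (WithLp.toLp 2 fun _ => 1) ∈ Lᗮ ⊔ vanishingOn S)
  obtain rfl := eq_sub_of_add_eq' hη₀r
  obtain ⟨v, ⟨hvL, hvS⟩, hlt⟩ := exists_mem_orthogonal_inf_vanishingOn_lt_one_sub h hη₀ hr
  refine ⟨η₀ + v, Lᗮ.add_mem hη₀ hvL, fun i hi => ?_, fun i hi => ?_⟩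
  · have := hr i hi
    simp only [PiLp.sub_apply] at this
    simp [hvS i hi]
    linarith
  · simpa [lt_sub_iff_add_lt'] using hlt i hi

end Coordinates

theorem exists_transpose_mulVec_eq_one_on_lt_one_off {m n : Type*} [Fintype m] [Fintype n]
    (A : Matrix m n ℝ) (S : Finset n)
    (h : ∀ d : n → ℝ, A *ᵥ d = 0 → (∀ i ∉ S, 0 ≤ d i) → d ≠ 0 → 0 < ∑ i, d i) :
    ∃ u : m → ℝ, (∀ i ∈ S, (Aᵀ *ᵥ u) i = 1) ∧ ∀ i ∉ S, (Aᵀ *ᵥ u) i < 1 := by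
  classical
  have hker : (LinearMap.ker A.toEuclideanLin)ᗮ = LinearMap.range Aᵀ.toEuclideanLin := by
    rw [LinearMap.orthogonal_ker, ← toEuclideanLin_conjTranspose_eq_adjoint,
      conjTranspose_eq_transpose_of_trivial]
  obtain ⟨η, hη, hS, hSc⟩ :=
    exists_mem_orthogonal_eq_one_on_lt_one_off (LinearMap.ker A.toEuclideanLin) S
      fun d hd hdS hd0 => h d.ofLp (by simpa [toLpLin_apply] using hd) hdS (by simpa using hd0)
  rw [hker] at hη
  obtain ⟨u, rfl⟩ := hη
  exact ⟨u.ofLp, hS, hSc⟩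

section Recovery

variable {m n K : ℕ} {A : Matrix (Fin m) (Fin n) ℝ}

lemma uniqueLeastL1.sum_pos_of_mulVec_eq_zero {y : Fin m → ℝ} {x d : Fin n → ℝ}
    (hx : uniqueLeastL1 A y x) (hd : A *ᵥ d = 0) (hxd : 0 ≤ x + d) (hd0 : d ≠ 0) :
    0 < ∑ i, d i := by
  obtain ⟨hAx, hx0, hmin⟩ := hx
  have hlt := hmin (x + d) (by rw [mulVec_add, hd, add_zero, hAx]) hxd (by simpa using hd0)
  rw [Finset.sum_congr rfl fun i _ => abs_of_nonneg (hx0 i),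
    Finset.sum_congr rfl fun i _ => abs_of_nonneg (hxd i)] at hlt
  simpa [Finset.sum_add_distrib] using hlt

lemma rspOrder_of_forall_uniqueLeastL1
    (h : ∀ x : Fin n → ℝ, 0 ≤ x → {i | x i ≠ 0}.ncard ≤ K → uniqueLeastL1 A (A *ᵥ x) x) :
    RSPorder A K := by
  classical
  intro S hS
  suffices hpos : ∀ d : Fin n → ℝ, A *ᵥ d = 0 → (∀ i ∉ S, 0 ≤ d i) → d ≠ 0 → 0 < ∑ i, d i by
    obtain ⟨u, h1, hlt⟩ := exists_transpose_mulVec_eq_one_on_lt_one_off A S hpos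
    exact ⟨_, ⟨u, rfl⟩, h1, hlt⟩
  intro d hd hdS hd0
  set x : Fin n → ℝ := fun i => if i ∈ S then ‖d‖ + 1 else 0
  have hx : 0 ≤ x := fun i => by dsimp only [x]; split_ifs <;> positivity
  have hsupp : {i | x i ≠ 0} = S := by ext i; by_cases hi : i ∈ S <;> simp [x, hi]; positivity
  refine (h x hx (by rwa [hsupp, Set.ncard_coe_finset])).sum_pos_of_mulVec_eq_zero hd
    (fun i => ?_) hd0
  by_cases hi : i ∈ S
  · have := (norm_le_pi_norm d i).trans' (neg_le_abs (d i))
    simp only [Pi.add_apply, Pi.zero_apply, x, if_pos hi]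
    linarith
  · simpa [x, hi] using hdS i hi

lemma sum_pos_of_rspOrder (hA : RSPorder A K) {d : Fin n → ℝ} (hd : A *ᵥ d = 0) (hd0 : d ≠ 0)
    (hK : (Finset.univ.filter fun i => d i < 0).card ≤ K) : 0 < ∑ i, d i := by
  obtain ⟨η, ⟨u, rfl⟩, hT, hTc⟩ := hA _ hK
  have hηd : ∑ i, (Aᵀ *ᵥ u) i * d i = 0 := by
    change (Aᵀ *ᵥ u) ⬝ᵥ d = 0
    rw [mulVec_transpose, ← dotProduct_mulVec, hd, dotProduct_zero]
  have hsum : ∑ i, d i = ∑ i, (1 - (Aᵀ *ᵥ u) i) * d i := by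
    simp [sub_mul, Finset.sum_sub_distrib, hηd]
  have hterm : ∀ i, 0 ≤ (1 - (Aᵀ *ᵥ u) i) * d i := fun i => by
    by_cases hi : d i < 0
    · simp [hT i (by simpa using hi)]
    · exact mul_nonneg (by linarith [hTc i (by simpa using hi)]) (not_lt.1 hi)
  by_cases hpos : ∃ j, 0 < d j
  · obtain ⟨j, hj⟩ := hpos
    rw [hsum]
    refine Finset.sum_pos' (fun i _ => hterm i) ⟨j, Finset.mem_univ j, mul_pos ?_ hj⟩
    linarith [hTc j (by simp; linarith)]
  · push Not at hpos
    obtain ⟨j, hj⟩ := Function.ne_iff.1 hd0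
    have hneg : ∑ i, d i < 0 :=
      Finset.sum_neg' (fun i _ => hpos i) ⟨j, Finset.mem_univ j, lt_of_le_of_ne (hpos j) hj⟩
    linarith [Finset.sum_nonneg fun i (_ : i ∈ Finset.univ) => hterm i]

lemma uniqueLeastL1_of_rspOrder (hA : RSPorder A K) {x : Fin n → ℝ} (hx : 0 ≤ x)
    (hK : {i | x i ≠ 0}.ncard ≤ K) : uniqueLeastL1 A (A *ᵥ x) x := by
  classical
  refine ⟨rfl, hx, fun z hz hz0 hzx => ?_⟩
  have hneg : (Finset.univ.filter fun i => (z - x) i < 0).card ≤ K := by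
    refine le_trans ?_ hK
    rw [← Set.ncard_coe_finset]
    refine Set.ncard_le_ncard (fun i hi => ?_) (Set.toFinite _)
    simp only [Finset.coe_filter, Finset.mem_univ, true_and, Set.mem_ofPred_eq, Pi.sub_apply,
      sub_neg] at hi ⊢
    exact ((hz0 i).trans_lt hi).ne'
  have := sum_pos_of_rspOrder hA (by rw [mulVec_sub, hz, sub_self]) (sub_ne_zero.2 hzx) hneg
  simpa [abs_of_nonneg (hx _), abs_of_nonneg (hz0 _), Finset.sum_sub_distrib] using this

end Recovery

theorem stmt_14_general {m n : ℕ} (A : Matrix (Fin m) (Fin n) ℝ) (K : ℕ) :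
    (∀ x : Fin n → ℝ, 0 ≤ x → {i : Fin n | x i ≠ 0}.ncard ≤ K →
      uniqueLeastL1 A (A.mulVec x) x) ↔ RSPorder A K :=
  ⟨rspOrder_of_forall_uniqueLeastL1, fun hA _ hx hK => uniqueLeastL1_of_rspOrder hA hx hK⟩

theorem stmt_14 {m n : ℕ} (hmn : m < n) (A : Matrix (Fin m) (Fin n) ℝ) (K : ℕ) :
    (∀ x : Fin n → ℝ, 0 ≤ x → {i : Fin n | x i ≠ 0}.ncard ≤ K →
      uniqueLeastL1 A (A.mulVec x) x) ↔ RSPorder A K :=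
  stmt_14_general A K
end

section
/- Let A be a real m×n matrix with m < n, and suppose there exists a subset S ⊆ {1,…,n} with |S| = K such that the column submatrix A_S has full column rank. Then Aᵀ has the weak range space property (WRSP) of order K if and only if every x ∈ ℝ^n with x ≥ 0, ‖x‖₀ ≤ K, and A_{J₊} of full column rank (where J₊ = {i : xᵢ > 0}) is the unique least ℓ1-norm nonnegative solution to the system Az = Ax. -/
/-!
If `η = Aᵀu` equals `1` on the support `S` of `x ≥ 0` and is `< 1` off it, then every nonnegative
solution `z` of `Az = Ax` satisfies `‖x‖₁ = ⟪η, x⟫ = ⟪u, Az⟫ = ⟪η, z⟫ ≤ ‖z‖₁`, with equality only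
if `z` vanishes off `S`, and then `z = x` because `A_S` has full column rank.

Conversely, if `x ≥ 0` is the unique least ℓ1-norm solution, no `d ≠ 0` with `Ad = 0`, `d ≥ 0` off
the support and `∑ d ≤ 0` exists, since `x + t d` would be an equally good solution for small
`t > 0`. In `ℝᵐ × ℝ` this says that the convex hull of `(0, 1)` and the `(-aⱼ, 1)`, `xⱼ = 0`,
misses the span of the `(aᵢ, -1)`, `xᵢ ≠ 0`. Separating this compact set from the closed subspace
gives a functional `(u, s)` vanishing on the span and negative on the hull, and `η = Aᵀu / s` is
the required vector. Applied to the indicator of `S` this yields the weak range space property.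
-/

open Matrix

/-- The column submatrix `A_S` has full column rank. -/
def fullColRank {m n : ℕ} (A : Matrix (Fin m) (Fin n) ℝ) (S : Finset (Fin n)) : Prop :=
  LinearIndependent ℝ (fun j : {i : Fin n // i ∈ S} => fun k : Fin m => A k j.1)

/-- `Aᵀ` has the weak range space property (WRSP) of order `K`. -/
def WRSPorder {m n : ℕ} (A : Matrix (Fin m) (Fin n) ℝ) (K : ℕ) : Prop :=
  (∃ S : Finset (Fin n), S.card = K ∧ fullColRank A S) ∧
  (∀ S : Finset (Fin n), S.card ≤ K → fullColRank A S →
    ∃ η : Fin n → ℝ, (∃ u : Fin m → ℝ, A.transpose.mulVec u = η) ∧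
      (∀ i ∈ S, η i = 1) ∧ (∀ i ∉ S, η i < 1))

open Finset Filter Topology

lemma exists_pos_nonneg_add_smul {ι : Type*} [Finite ι] {x d : ι → ℝ} (hx : 0 ≤ x)
    (hd : ∀ i, x i = 0 → 0 ≤ d i) : ∃ t : ℝ, 0 < t ∧ 0 ≤ x + t • d := by
  have hev : ∀ i, ∀ᶠ t in 𝓝[>] (0 : ℝ), 0 ≤ x i + t * d i := by
    intro i
    rcases (show 0 ≤ x i from hx i).eq_or_lt with hxi | hxi
    · filter_upwards [self_mem_nhdsWithin] with t ht
      rw [← hxi, zero_add]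
      exact mul_nonneg (le_of_lt ht) (hd i hxi.symm)
    · have : Tendsto (fun t : ℝ => x i + t * d i) (𝓝 0) (𝓝 (x i)) :=
        (continuous_const.add (continuous_id.mul continuous_const)).tendsto' _ _ (by simp)
      exact nhdsWithin_le_nhds ((this.eventually (lt_mem_nhds hxi)).mono fun _ h => h.le)
  obtain ⟨t, hxt, ht⟩ := ((eventually_all.2 hev).and self_mem_nhdsWithin).exists
  exact ⟨t, ht, fun i => by simpa using hxt i⟩

theorem Submodule.exists_strongDual_eq_zero_and_lt_zero {E ι : Type*} [NormedAddCommGroup E]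
    [NormedSpace ℝ E] [FiniteDimensional ℝ E] [Fintype ι] (W : Submodule ℝ E) (g : ι → E)
    (hg : ∀ c ∈ stdSimplex ℝ ι, ∑ k, c k • g k ∉ W) :
    ∃ f : StrongDual ℝ E, (∀ w ∈ W, f w = 0) ∧ ∀ k, f (g k) < 0 := by
  classical
  let L := Fintype.linearCombination ℝ g
  let C : ProperCone ℝ E := ⟨W.restrictScalars _, W.closed_of_finiteDimensional⟩
  obtain ⟨f, hfC, hfK⟩ := C.hyperplane_separation ((convex_stdSimplex ℝ ι).linear_image L)
    ((isCompact_stdSimplex ℝ ι).image L.continuous_of_finiteDimensional)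
    (Set.disjoint_left.mpr <| by rintro _ ⟨c, hc, rfl⟩; exact hg c hc)
  refine ⟨f, fun w hw => le_antisymm ?_ (hfC w hw), fun k => hfK _ ⟨Pi.single k 1, ?_, ?_⟩⟩
  · simpa using hfC (-w) (W.neg_mem hw)
  · exact single_mem_stdSimplex ℝ k
  · simp [L, Fintype.linearCombination_apply, Pi.single_apply]

lemma StrongDual.apply_prod_eq {ι : Type*} [Fintype ι] [DecidableEq ι]
    (f : StrongDual ℝ ((ι → ℝ) × ℝ)) (b : ι → ℝ) (t : ℝ) :
    f (b, t) = b ⬝ᵥ (fun k => f (Pi.single k 1, 0)) + t * f (0, 1) := by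
  have hbt : (b, t) =
      ∑ k, b k • ((Pi.single k 1 : ι → ℝ), (0 : ℝ)) + t • ((0 : ι → ℝ), (1 : ℝ)) := by
    ext <;> simp [Prod.fst_sum, Prod.snd_sum, Finset.sum_apply, Pi.single_apply]
  rw [hbt]
  simp only [map_add, map_sum, map_smul, smul_eq_mul, dotProduct]

variable {m n : ℕ} {A : Matrix (Fin m) (Fin n) ℝ}

theorem uniqueLeastL1.eq_zero_of_mulVec_eq_zero {y : Fin m → ℝ} {x d : Fin n → ℝ}
    (hx : uniqueLeastL1 A y x) (hAd : A *ᵥ d = 0) (hd : ∀ i, x i = 0 → 0 ≤ d i)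
    (hsum : ∑ i, d i ≤ 0) : d = 0 := by
  obtain ⟨hAx, hx0, hmin⟩ := hx
  obtain ⟨t, ht, hz0⟩ := exists_pos_nonneg_add_smul hx0 hd
  by_contra hne
  have hlt := hmin (x + t • d) (by rw [mulVec_add, mulVec_smul, hAd, smul_zero, add_zero, hAx])
    hz0 (by simpa [ht.ne'] using hne)
  simp only [abs_of_nonneg (hx0 _), abs_of_nonneg (hz0 _)] at hlt
  simp only [Pi.add_apply, Pi.smul_apply, smul_eq_mul, sum_add_distrib, ← mul_sum] at hlt
  linarith [mul_nonpos_of_nonneg_of_nonpos ht.le hsum]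

theorem fullColRank.eq_zero_of_mulVec_eq_zero {S : Finset (Fin n)} (hS : fullColRank A S)
    {d : Fin n → ℝ} (hd : ∀ i ∉ S, d i = 0) (hAd : A *ᵥ d = 0) : d = 0 := by
  have hsum : ∑ j : S, d j • (fun k => A k j) = 0 := by
    ext k
    rw [← congrFun hAd k]
    simp only [Finset.sum_apply, Pi.smul_apply, smul_eq_mul, mulVec, dotProduct]
    rw [sum_coe_sort S fun j => d j * A k j,
      sum_subset (subset_univ S) fun i _ hi => by simp [hd i hi]]
    exact sum_congr rfl fun _ _ => mul_comm _ _
  ext i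
  by_cases hi : i ∈ S
  · exact Fintype.linearIndependent_iff.mp hS _ hsum ⟨i, hi⟩
  · exact hd i hi

lemma fullColRank_filter_iff (p : Fin n → Prop) [DecidablePred p] :
    fullColRank A (univ.filter p) ↔
      LinearIndependent ℝ (fun j : {i // p i} => fun k => A k j.1) :=
  linearIndependent_equiv' (Equiv.subtypeEquivRight fun i => by simp) rfl

theorem uniqueLeastL1_of_fullColRank {S : Finset (Fin n)} {x : Fin n → ℝ} (hx0 : 0 ≤ x)
    (hxS : ∀ i ∉ S, x i = 0) (hS : fullColRank A S) (u : Fin m → ℝ)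
    (hu₁ : ∀ i ∈ S, (u ᵥ* A) i = 1) (hu₂ : ∀ i ∉ S, (u ᵥ* A) i < 1) :
    uniqueLeastL1 A (A *ᵥ x) x := by
  refine ⟨rfl, hx0, fun z hAz hz0 hzx => ?_⟩
  obtain ⟨j, hjS, hzj⟩ : ∃ j ∉ S, z j ≠ 0 := by
    by_contra! h
    refine hzx (sub_eq_zero.mp (hS.eq_zero_of_mulVec_eq_zero (fun i hi => ?_) ?_))
    · simp [h i hi, hxS i hi]
    · rw [mulVec_sub, hAz, sub_self]
  have hηx : u ᵥ* A ⬝ᵥ x = ∑ i, x i := by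
    refine sum_congr rfl fun i _ => ?_
    by_cases hi : i ∈ S
    · rw [hu₁ i hi, one_mul]
    · rw [hxS i hi, mul_zero]
  calc ∑ i, |x i| = u ᵥ* A ⬝ᵥ z := by
        simp only [abs_of_nonneg (hx0 _), ← hηx, ← dotProduct_mulVec, hAz]
    _ < ∑ i, z i := by
        refine sum_lt_sum (fun i _ => ?_) ⟨j, mem_univ j, ?_⟩
        · by_cases hi : i ∈ S
          · rw [hu₁ i hi, one_mul]
          · exact mul_le_of_le_one_left (hz0 i) (hu₂ i hi).le
        · exact mul_lt_of_lt_one_left ((hz0 j).lt_of_ne' hzj) (hu₂ j hjS)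
    _ = ∑ i, |z i| := by simp only [abs_of_nonneg (hz0 _)]

-- Spans the subspace on which the dual functional `(u, s)` has to vanish.
noncomputable def supportVec (A : Matrix (Fin m) (Fin n) ℝ) (x : Fin n → ℝ) (i : Fin n) :
    (Fin m → ℝ) × ℝ :=
  if x i = 0 then 0 else (Aᵀ i, -1)

-- The points on which `(u, s)` has to be negative; the entries `some j` with `xⱼ ≠ 0` only repeat
-- `(0, 1)`.
noncomputable def offSupportVec (A : Matrix (Fin m) (Fin n) ℝ) (x : Fin n → ℝ)
    (k : Option (Fin n)) : (Fin m → ℝ) × ℝ :=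
  (k.elim 0 fun j => if x j = 0 then -Aᵀ j else 0, 1)

theorem uniqueLeastL1.sum_smul_offSupportVec_notMem_span {y : Fin m → ℝ} {x : Fin n → ℝ}
    (hx : uniqueLeastL1 A y x) {c : Option (Fin n) → ℝ} (hc : c ∈ stdSimplex ℝ (Option (Fin n))) :
    ∑ k, c k • offSupportVec A x k ∉ Submodule.span ℝ (Set.range (supportVec A x)) := by
  intro hW
  obtain ⟨b, hb⟩ := (Submodule.mem_span_range_iff_exists_fun ℝ).mp hW
  have hfst : ∀ r, (∑ i, if x i = 0 then 0 else b i * A r i) =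
      ∑ i, if x i = 0 then -(c (some i) * A r i) else 0 := fun r => by
    simpa [Prod.fst_sum, Finset.sum_apply, Fintype.sum_option, apply_ite, ite_apply,
      supportVec, offSupportVec] using congrArg (fun p => p.1 r) hb
  have hsnd : (∑ i, if x i = 0 then 0 else -b i) = c none + ∑ i, c (some i) := by
    simpa [Prod.snd_sum, Fintype.sum_option, apply_ite, supportVec, offSupportVec]
      using congrArg Prod.snd hb
  -- Glued together, the coefficients form a descent direction that uniqueness rules out.
  let d : Fin n → ℝ := fun i => if x i = 0 then c (some i) else b i
  have hd0 : d = 0 := by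
    refine hx.eq_zero_of_mulVec_eq_zero ?_ (fun i hi => by simp [d, hi, hc.1]) ?_
    · ext r
      have hr := hfst r
      rw [← sub_eq_zero, ← sum_sub_distrib] at hr
      rw [Pi.zero_apply, ← hr]
      simp only [mulVec, dotProduct, d]
      refine sum_congr rfl fun i _ => ?_
      split_ifs <;> ring
    · calc ∑ i, d i ≤ ∑ i, (c (some i) - if x i = 0 then 0 else -b i) :=
            sum_le_sum fun i _ => by
              simp only [d]; split_ifs <;> linarith [hc.1 (some i)]
        _ = -c none := by rw [sum_sub_distrib, hsnd]; ring
        _ ≤ 0 := neg_nonpos.mpr (hc.1 none)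
  have hsum := hc.2
  rw [Fintype.sum_option, ← hsnd] at hsum
  refine one_ne_zero (hsum.symm.trans (sum_eq_zero fun i _ => ?_))
  have := congrFun hd0 i
  simp only [d, Pi.zero_apply] at this
  split_ifs at this ⊢ <;> simp [this]

theorem uniqueLeastL1.exists_vecMul {y : Fin m → ℝ} {x : Fin n → ℝ} (hx : uniqueLeastL1 A y x) :
    ∃ u : Fin m → ℝ, (∀ i, x i ≠ 0 → (u ᵥ* A) i = 1) ∧ ∀ i, x i = 0 → (u ᵥ* A) i < 1 := by
  obtain ⟨f, hf₀, hf_neg⟩ := Submodule.exists_strongDual_eq_zero_and_lt_zero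
    (Submodule.span ℝ (Set.range (supportVec A x))) _
    fun _ => hx.sum_smul_offSupportVec_notMem_span
  set u : Fin m → ℝ := fun k => f (Pi.single k 1, 0)
  set s := f (0, 1)
  have hf : ∀ i t, f (Aᵀ i, t) = (u ᵥ* A) i + t * s := fun i t => by
    rw [StrongDual.apply_prod_eq, dotProduct_comm]; rfl
  have hs : s < 0 := by simpa [offSupportVec] using hf_neg none
  refine ⟨s⁻¹ • u, fun i hi => ?_, fun i hi => ?_⟩
  · have := hf₀ _ (Submodule.subset_span ⟨i, rfl⟩)
    simp only [supportVec, if_neg hi, hf] at this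
    rw [smul_vecMul, Pi.smul_apply, smul_eq_mul, inv_mul_eq_one₀ hs.ne]
    linarith
  · have := hf_neg (some i)
    simp only [offSupportVec, Option.elim_some, if_pos hi] at this
    rw [show (-Aᵀ i, (1 : ℝ)) = -(Aᵀ i, -1) by simp, map_neg, hf] at this
    rw [smul_vecMul, Pi.smul_apply, smul_eq_mul, ← div_eq_inv_mul, div_lt_one_of_neg hs]
    linarith

theorem stmt_16_general {m n : ℕ} (A : Matrix (Fin m) (Fin n) ℝ) (K : ℕ)
    (hex : ∃ S : Finset (Fin n), S.card = K ∧ fullColRank A S) :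
    WRSPorder A K ↔
      ∀ x : Fin n → ℝ, 0 ≤ x → {i : Fin n | x i ≠ 0}.ncard ≤ K →
        LinearIndependent ℝ (fun j : {i : Fin n // 0 < x i} =>
          fun k : Fin m => A k j.1) →
        uniqueLeastL1 A (A.mulVec x) x := by
  constructor
  · rintro ⟨-, hW⟩ x hx0 hcard hli
    set S := univ.filter fun i => 0 < x i
    have hS : fullColRank A S := (fullColRank_filter_iff _).2 hli
    have hxS : ∀ i ∉ S, x i = 0 := fun i hi =>
      le_antisymm (not_lt.mp (by simpa [S] using hi)) (hx0 i)
    have hsupp : {i | x i ≠ 0} = ↑S := by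
      ext i
      simp [S, lt_iff_le_and_ne, show 0 ≤ x i from hx0 i, eq_comm]
    obtain ⟨η, ⟨u, rfl⟩, hu₁, hu₂⟩ := hW S (by rwa [hsupp, Set.ncard_coe_finset] at hcard) hS
    rw [mulVec_transpose] at hu₁ hu₂
    exact uniqueLeastL1_of_fullColRank hx0 hxS hS u hu₁ hu₂
  · intro h
    refine ⟨hex, fun S hcard hS => ?_⟩
    set x : Fin n → ℝ := fun i => if i ∈ S then 1 else 0
    have hpos : univ.filter (fun i => 0 < x i) = S := by ext i; by_cases i ∈ S <;> simp [x, *]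
    have hsupp : {i | x i ≠ 0} = ↑S := by ext i; by_cases i ∈ S <;> simp [x, *]
    have hx := h x (fun i => by by_cases i ∈ S <;> simp [x, *])
      (by rwa [hsupp, Set.ncard_coe_finset]) ((fullColRank_filter_iff _).1 (hpos ▸ hS))
    obtain ⟨u, hu₁, hu₂⟩ := hx.exists_vecMul
    exact ⟨u ᵥ* A, ⟨u, mulVec_transpose A u⟩, fun i hi => hu₁ i (by simp [x, hi]),
      fun i hi => hu₂ i (by simp [x, hi])⟩

theorem stmt_16 {m n : ℕ} (hmn : m < n) (A : Matrix (Fin m) (Fin n) ℝ) (K : ℕ)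
    (hex : ∃ S : Finset (Fin n), S.card = K ∧ fullColRank A S) :
    WRSPorder A K ↔
      ∀ x : Fin n → ℝ, 0 ≤ x → {i : Fin n | x i ≠ 0}.ncard ≤ K →
        LinearIndependent ℝ (fun j : {i : Fin n // 0 < x i} =>
          fun k : Fin m => A k j.1) →
        uniqueLeastL1 A (A.mulVec x) x :=
  stmt_16_general A K hex
end
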